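/- arXiv:2402.12248 — 3 statements merged into one kernel-verified Lean document; each statement's English description precedes it below -/
import Mathlib

section
/- For the modified Patankar forward Euler update h_α^{n+1} = h_α^n + Δt Σ_β (p_{α,β}(h^n) h_β^{n+1}/h_β^n - d_{α,β}(h^n) h_α^{n+1}/h_α^n) with nonnegative productions/destructions p_{α,β}, d_{α,β} and positive h^n, the resulting linear system matrix M (with M_{αα} = 1 + (Δt/h_α^n) Σ_β d_{α,β}(h^n) and M_{αβ} = -(Δt/h_β^n) p_{α,β}(h^n) for α ≠ β) is strictly column diagonally dominant whenever the PDS is conservative (p_{α,β} = d_{β,α}), and hence h^{n+1} > 0 componentwise for any Δt > 0. -/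
open Finset

/-- The modified Patankar forward Euler system matrix, built from a conservative
production-destruction system with positive state `hⁿ`, is strictly column
diagonally dominant, and consequently the update `h^{n+1}` (solution of
`M h^{n+1} = hⁿ`) exists and is componentwise positive for any `Δt > 0`. -/
theorem mPE_matrix_column_dominant_and_positive_update
    (N : ℕ) (Δt : ℝ) (hΔt : 0 < Δt)
    (hn : Fin N → ℝ) (hpos : ∀ α, 0 < hn α)
    (p d : (Fin N → ℝ) → Fin N → Fin N → ℝ)
    (hp : ∀ c α β, 0 ≤ p c α β) (hd : ∀ c α β, 0 ≤ d c α β)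
    (hcons : ∀ c α β, p c α β = d c β α)
    (M : Matrix (Fin N) (Fin N) ℝ)
    (hM : ∀ α β, M α β =
      if α = β then 1 + Δt / hn α * ∑ γ, d hn α γ
      else -(Δt / hn β) * p hn α β) :
    (∀ β, ∑ α ∈ univ.erase β, |M α β| < M β β) ∧
    ∃ hnew : Fin N → ℝ, M.mulVec hnew = hn ∧ ∀ α, 0 < hnew α := by
  -- off-diagonal entries are nonpositive
  have hoff : ∀ α β, α ≠ β → M α β ≤ 0 := by
    intro α β hne
    rw [hM α β, if_neg hne, neg_mul]
    exact neg_nonpos.mpr (mul_nonneg (le_of_lt (div_pos hΔt (hpos β))) (hp hn α β))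
  -- strict column diagonal dominance
  have hdom : ∀ β, ∑ α ∈ univ.erase β, |M α β| < M β β := by
    intro β
    have hq : 0 < Δt / hn β := div_pos hΔt (hpos β)
    have habs : ∀ α ∈ univ.erase β, |M α β| = Δt / hn β * p hn α β := by
      intro α hα
      have hne : α ≠ β := (mem_erase.mp hα).1
      rw [abs_of_nonpos (hoff α β hne), hM α β, if_neg hne]
      ring
    rw [Finset.sum_congr rfl habs, ← Finset.mul_sum]
    have hsum : ∑ α ∈ univ.erase β, p hn α β = (∑ γ, d hn β γ) - d hn β β := by
      rw [Finset.sum_erase_eq_sub (mem_univ β)]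
      congr 1
      exact Finset.sum_congr rfl fun α _ => hcons hn α β
      exact hcons hn β β
    rw [hsum, hM β β, if_pos rfl]
    nlinarith [hd hn β β]
  refine ⟨hdom, ?_⟩
  -- diagonal entries are positive
  have hdiag : ∀ β, 0 < M β β := fun β =>
    lt_of_le_of_lt (Finset.sum_nonneg fun α _ => abs_nonneg _) (hdom β)
  -- `vecMul` is injective, hence `M` is a unit
  have hinj : Function.Injective M.vecMul := by
    intro u w huw
    by_contra hne
    have hvne : u - w ≠ 0 := sub_ne_zero.mpr hne
    set v : Fin N → ℝ := u - w with hv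
    have hv0 : Matrix.vecMul v M = 0 := by
      simp only at huw
      rw [hv, Matrix.sub_vecMul, huw, sub_self]
    obtain ⟨β₀, hβ₀⟩ : ∃ β₀, v β₀ ≠ 0 := by
      by_contra h
      push_neg at h
      exact hvne (funext h)
    obtain ⟨β, -, hβmax⟩ := Finset.exists_max_image univ (fun α => |v α|) ⟨β₀, mem_univ β₀⟩
    have hvβ : 0 < |v β| := lt_of_lt_of_le (abs_pos.mpr hβ₀) (hβmax β₀ (mem_univ β₀))
    have hrow : ∑ α, v α * M α β = 0 := by
      have := congrFun hv0 β
      simpa [Matrix.vecMul, dotProduct] using this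
    have hsplit : v β * M β β = -∑ α ∈ univ.erase β, v α * M α β := by
      have h : v β * M β β + ∑ α ∈ univ.erase β, v α * M α β = ∑ α, v α * M α β :=
        Finset.add_sum_erase univ (fun α => v α * M α β) (mem_univ β)
      linarith [hrow, h]
    have hchain : |v β| * M β β < |v β| * M β β := by
      calc |v β| * M β β = |v β * M β β| := by
            rw [abs_mul, abs_of_pos (hdiag β)]
        _ = |∑ α ∈ univ.erase β, v α * M α β| := by rw [hsplit, abs_neg]
        _ ≤ ∑ α ∈ univ.erase β, |v α * M α β| := Finset.abs_sum_le_sum_abs _ _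
        _ ≤ ∑ α ∈ univ.erase β, |v β| * |M α β| := by
            refine Finset.sum_le_sum fun α _ => ?_
            rw [abs_mul]
            exact mul_le_mul_of_nonneg_right (hβmax α (mem_univ α)) (abs_nonneg _)
        _ = |v β| * ∑ α ∈ univ.erase β, |M α β| := by rw [Finset.mul_sum]
        _ < |v β| * M β β := mul_lt_mul_of_pos_left (hdom β) hvβ
    exact lt_irrefl _ hchain
  have hu : IsUnit M := Matrix.vecMul_injective_iff_isUnit.mp hinj
  obtain ⟨x, hx⟩ := Matrix.mulVec_surjective_iff_isUnit.mpr hu hn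
  refine ⟨x, hx, ?_⟩
  -- positivity via the sign-set argument
  by_contra hneg
  push_neg at hneg
  obtain ⟨α₀, hα₀⟩ := hneg
  set S : Finset (Fin N) := univ.filter (fun α => x α ≤ 0) with hS
  have hα₀S : α₀ ∈ S := by simp [hS, hα₀]
  have hSsum : (0:ℝ) < ∑ α ∈ S, hn α :=
    Finset.sum_pos (fun α _ => hpos α) ⟨α₀, hα₀S⟩
  have key : ∑ α ∈ S, hn α ≤ 0 := by
    have heq : ∑ α ∈ S, hn α = ∑ β, (∑ α ∈ S, M α β) * x β := by
      calc ∑ α ∈ S, hn α = ∑ α ∈ S, ∑ β, M α β * x β := by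
            refine Finset.sum_congr rfl fun α _ => ?_
            rw [← hx]
            simp [Matrix.mulVec, dotProduct]
        _ = ∑ β, ∑ α ∈ S, M α β * x β := Finset.sum_comm
        _ = ∑ β, (∑ α ∈ S, M α β) * x β := by
            refine Finset.sum_congr rfl fun β _ => ?_
            rw [Finset.sum_mul]
    rw [heq]
    refine Finset.sum_nonpos fun β _ => ?_
    by_cases hβS : β ∈ S
    · -- x β ≤ 0 and column partial sum is positive
      have hxβ : x β ≤ 0 := (Finset.mem_filter.mp hβS).2
      have hcolpos : 0 ≤ ∑ α ∈ S, M α β := by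
        rw [← Finset.add_sum_erase S (fun α => M α β) hβS]
        have h1 : ∑ α ∈ S.erase β, |M α β| ≤ ∑ α ∈ univ.erase β, |M α β| :=
          Finset.sum_le_sum_of_subset_of_nonneg
            (Finset.erase_subset_erase β (Finset.subset_univ S))
            (fun _ _ _ => abs_nonneg _)
        have h2 : -∑ α ∈ S.erase β, |M α β| ≤ ∑ α ∈ S.erase β, M α β := by
          rw [← Finset.sum_neg_distrib]
          exact Finset.sum_le_sum fun α _ => neg_abs_le _
        linarith [hdom β]
      exact mul_nonpos_of_nonneg_of_nonpos hcolpos hxβ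
    · -- x β > 0 and column partial sum is nonpositive
      have hxβ : 0 < x β := by
        have := Finset.mem_filter.not.mp hβS
        push_neg at this
        exact this (mem_univ β)
      have hcolneg : ∑ α ∈ S, M α β ≤ 0 := by
        refine Finset.sum_nonpos fun α hαS => ?_
        have hne : α ≠ β := fun h => hβS (h ▸ hαS)
        exact hoff α β hne
      exact mul_nonpos_of_nonpos_of_nonneg hcolneg (le_of_lt hxβ)
  linarith
end

section
/- The modified Patankar forward Euler scheme is unconditionally conservative: if p_{α,β} = d_{β,α} (conservativity), then for any Δt > 0 and positive h^n, the update h^{n+1} satisfies Σ_α h_α^{n+1} = Σ_α h_α^n. -/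
open Finset

/-- The modified Patankar forward Euler scheme is unconditionally conservative:
for a conservative production-destruction system (`p α β = d β α`), any update
`h^{n+1}` satisfying the modified Patankar relations preserves the total sum,
for any `Δt > 0` and any positive `hⁿ`. -/
theorem mPE_unconditionally_conservative
    (N : ℕ) (Δt : ℝ) (hΔt : 0 < Δt)
    (hn hnew : Fin N → ℝ) (hpos : ∀ α, 0 < hn α)
    (p d : (Fin N → ℝ) → Fin N → Fin N → ℝ)
    (hp : ∀ c α β, 0 ≤ p c α β) (hd : ∀ c α β, 0 ≤ d c α β)
    (hcons : ∀ c α β, p c α β = d c β α)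
    (hupdate : ∀ α, hnew α = hn α +
      Δt * ∑ β, (p hn α β * hnew β / hn β - d hn α β * hnew α / hn α)) :
    ∑ α, hnew α = ∑ α, hn α := by
  have key : ∑ α, ∑ β, (p hn α β * hnew β / hn β - d hn α β * hnew α / hn α) = 0 := by
    simp only [Finset.sum_sub_distrib]
    have : ∑ α, ∑ β, p hn α β * hnew β / hn β = ∑ α, ∑ β, d hn α β * hnew α / hn α := by
      rw [Finset.sum_comm]
      exact Finset.sum_congr rfl fun α _ => Finset.sum_congr rfl fun β _ => by rw [hcons]
    rw [this, sub_self]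
  calc ∑ α, hnew α
      = ∑ α, (hn α + Δt * ∑ β, (p hn α β * hnew β / hn β - d hn α β * hnew α / hn α)) := by
        exact Finset.sum_congr rfl fun α _ => hupdate α
    _ = ∑ α, hn α + Δt * ∑ α, ∑ β, (p hn α β * hnew β / hn β - d hn α β * hnew α / hn α) := by
        rw [Finset.sum_add_distrib, Finset.mul_sum]
    _ = ∑ α, hn α := by rw [key]; ring
end

section
/- If the DeC fixed-point operator is a contraction with constant L·Δt < 1 (L the Lipschitz constant of the update map) and the fixed point c* is an R-th order accurate approximation of the exact solution, then after p iterations starting from the 0-th order initialization c^{(0)} = c_n, the iterate c^{(p)} satisfies ‖c^{(p)} - c(t_{n+1})‖ ≤ (LΔt)^p ‖c^{(0)} - c*‖ + C Δt^{R+1}, so the order of accuracy of c^{(p)} is min(p, R). -/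
/-- Abstract DeC convergence: if the DeC fixed-point operator `Φ` is a
contraction with constant `L·Δt < 1`, its fixed point `c*` is an `R`-th order
accurate approximation of the exact solution (`‖c* - c_exact‖ ≤ C Δt^{R+1}`),
and the initialization satisfies `‖c⁽⁰⁾ - c*‖ ≤ C₀ Δt`, then after `p`
iterations `‖c⁽ᵖ⁾ - c_exact‖ ≤ (LΔt)^p ‖c⁽⁰⁾ - c*‖ + C Δt^{R+1}`, so the order
of accuracy of `c⁽ᵖ⁾` is `min(p, R)`. -/
theorem dec_iteration_error_bound
    {d : ℕ} (Φ : EuclideanSpace ℝ (Fin d) → EuclideanSpace ℝ (Fin d))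
    (L Δt C C₀ : ℝ) (R : ℕ)
    (hL : 0 ≤ L) (hΔt : 0 ≤ Δt) (hcontr : L * Δt < 1)
    (hlip : ∀ a b, ‖Φ a - Φ b‖ ≤ L * Δt * ‖a - b‖)
    (cstar cexact : EuclideanSpace ℝ (Fin d))
    (hfix : Φ cstar = cstar)
    (hacc : ‖cstar - cexact‖ ≤ C * Δt ^ (R + 1))
    (c0 : EuclideanSpace ℝ (Fin d))
    (hinit : ‖c0 - cstar‖ ≤ C₀ * Δt) :
    ∀ p : ℕ, ‖Φ^[p] c0 - cexact‖ ≤ (L * Δt) ^ p * ‖c0 - cstar‖ + C * Δt ^ (R + 1) := by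
  have key : ∀ p : ℕ, ‖Φ^[p] c0 - cstar‖ ≤ (L * Δt) ^ p * ‖c0 - cstar‖ := by
    intro p
    induction p with
    | zero => simp
    | succ n ih =>
      have h1 : Φ^[n + 1] c0 = Φ (Φ^[n] c0) := Function.iterate_succ_apply' Φ n c0
      calc ‖Φ^[n + 1] c0 - cstar‖ = ‖Φ (Φ^[n] c0) - Φ cstar‖ := by rw [h1, hfix]
        _ ≤ L * Δt * ‖Φ^[n] c0 - cstar‖ := hlip _ _
        _ ≤ L * Δt * ((L * Δt) ^ n * ‖c0 - cstar‖) := by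
            apply mul_le_mul_of_nonneg_left ih (mul_nonneg hL hΔt)
        _ = (L * Δt) ^ (n + 1) * ‖c0 - cstar‖ := by ring
  intro p
  calc ‖Φ^[p] c0 - cexact‖ ≤ ‖Φ^[p] c0 - cstar‖ + ‖cstar - cexact‖ := norm_sub_le_norm_sub_add_norm_sub _ _ _
    _ ≤ (L * Δt) ^ p * ‖c0 - cstar‖ + C * Δt ^ (R + 1) := add_le_add (key p) hacc
end
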